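/- The ten even theta constants of genus 2 have no common zero on the Siegel upper half-space H₂; equivalently, for every Z ∈ H₂ there exists an even characteristic m with θ[m](Z) ≠ 0. -/

import Mathlib

open Matrix

/-- The genus-2 Siegel upper half-space. -/
def SiegelH2 : Set (Matrix (Fin 2) (Fin 2) ℂ) :=
  {Z | Z.IsSymm ∧ (Z.map Complex.im).PosDef}

/-- The genus-2 theta nullwert with characteristic `m = (a,b)`. -/
noncomputable def thetaNull (a b : Fin 2 → ℤ) (Z : Matrix (Fin 2) (Fin 2) ℂ) : ℂ :=
  ∑' g : Fin 2 → ℤ,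
    Complex.exp ((Real.pi : ℂ) * Complex.I *
      ((fun i => (g i : ℂ) + (a i : ℂ) / 2) ⬝ᵥ
          Z *ᵥ (fun i => (g i : ℂ) + (a i : ℂ) / 2) +
        (fun i => (g i : ℂ) + (a i : ℂ) / 2) ⬝ᵥ (fun i => (b i : ℂ))))

/-!
If all even theta constants vanished at `Z`, so would the `2 ^ g` constants `θ[0;c]`,
`c ∈ {0,1}^g`. The duplication formulas
`∑_c (-1)^(τ·c) θ[0;c](Z) = 2^g θ[τ;0](4Z)` and
`θ[0;c](Z)² = ∑_a (-1)^(a·c) θ[a;0](2Z)²`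
then show that all `θ[τ;0](4Z)` vanish, hence all `θ[0;c](2Z)`. Iterating,
`θ[0;0](2^k Z) = 0` for every `k`; but `θ[0;0](tZ) → 1` as `t → ∞`, since every term with
`g ≠ 0` decays like `exp (-π t gᵀ (Im Z) g)`.
-/

open Complex Filter Topology
open scoped Real

noncomputable section

variable {ι : Type*}

lemma Matrix.PosDef.exists_pos_mul_dotProduct_self_le [Fintype ι] {M : Matrix ι ι ℝ}
    (hM : M.PosDef) :
    ∃ l > 0, ∀ x : ι → ℝ, l * (x ⬝ᵥ x) ≤ x ⬝ᵥ M *ᵥ x := by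
  set K := {x : ι → ℝ | x ⬝ᵥ x = 1}
  have hK : IsCompact K := by
    refine Metric.isCompact_of_isClosed_isBounded (isClosed_eq (by fun_prop) continuous_const)
      ((Metric.isBounded_closedBall (x := 0) (r := 1)).subset fun x hx => ?_)
    rw [mem_closedBall_zero_iff, pi_norm_le_iff_of_nonneg zero_le_one]
    intro i
    rw [Real.norm_eq_abs, ← sq_le_one_iff_abs_le_one, ← show x ⬝ᵥ x = 1 from hx, sq]
    exact Finset.single_le_sum (f := fun j => x j * x j) (fun j _ => mul_self_nonneg _)
      (Finset.mem_univ i)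
  obtain ⟨l, hl, hlK⟩ : ∃ l > 0, ∀ y ∈ K, l ≤ y ⬝ᵥ M *ᵥ y := by
    rcases K.eq_empty_or_nonempty with hempty | hne
    · exact ⟨1, one_pos, by simp [hempty]⟩
    obtain ⟨y₀, hy₀, hmin⟩ :=
      hK.exists_isMinOn hne (f := fun y => y ⬝ᵥ M *ᵥ y) (by fun_prop)
    refine ⟨_, hM.dotProduct_mulVec_pos fun h => ?_, hmin⟩
    simp [K, h] at hy₀
  refine ⟨l, hl, fun x => ?_⟩
  rcases eq_or_ne x 0 with rfl | hx
  · simp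
  have hs : 0 < x ⬝ᵥ x := lt_of_le_of_ne (Finset.sum_nonneg fun i _ => mul_self_nonneg _)
    (Ne.symm (dotProduct_self_eq_zero.not.2 hx))
  set r := √(x ⬝ᵥ x)
  have hr : r * r = x ⬝ᵥ x := Real.mul_self_sqrt hs.le
  have hr0 : 0 < r := Real.sqrt_pos.2 hs
  have hy : r⁻¹ • x ∈ K := by
    simp only [K, Set.mem_ofPred_eq, smul_dotProduct, dotProduct_smul, smul_eq_mul, ← hr]
    field_simp
  have := hlK _ hy
  simp only [mulVec_smul, smul_dotProduct, dotProduct_smul, smul_eq_mul] at this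
  rw [← hr]
  field_simp at this
  linarith

lemma summable_pi_prod_of_nonneg [Fintype ι] {κ : Type*} {f : ι → κ → ℝ}
    (hf : ∀ i n, 0 ≤ f i n) (hs : ∀ i, Summable (f i)) :
    Summable fun g : ι → κ => ∏ i, f i (g i) := by
  classical
  refine summable_of_sum_le (c := ∏ i, ∑' n, f i n)
    (fun g => Finset.prod_nonneg fun i _ => hf i _) fun s => ?_
  calc ∑ g ∈ s, ∏ i, f i (g i)
      ≤ ∑ g ∈ Fintype.piFinset fun i => s.image (· i), ∏ i, f i (g i) :=
        Finset.sum_le_sum_of_subset_of_nonneg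
          (fun g hg => Fintype.mem_piFinset.2 fun i => Finset.mem_image_of_mem _ hg)
          fun g _ _ => Finset.prod_nonneg fun i _ => hf i _
    _ = ∏ i, ∑ n ∈ s.image (· i), f i n := (Finset.prod_univ_sum _ _).symm
    _ ≤ ∏ i, ∑' n, f i n :=
        Finset.prod_le_prod (fun i _ => Finset.sum_nonneg fun n _ => hf i n)
          fun i _ => (hs i).sum_le_tsum _ fun n _ => hf i n

lemma summable_exp_neg_mul_add_sq {c : ℝ} (hc : 0 < c) (α : ℝ) :
    Summable fun n : ℤ => Real.exp (-(c * (n + α) ^ 2)) := by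
  have h := ((summable_jacobiTheta₂_term_iff ((c * α / π : ℝ) * I) ((c / π : ℝ) * I)).2
    (by simpa using div_pos hc Real.pi_pos)).norm.mul_right (Real.exp (-(c * α ^ 2)))
  refine h.congr fun n => ?_
  rw [norm_jacobiTheta₂_term, ← Real.exp_add, mul_I_im, mul_I_im, ofReal_re, ofReal_re]
  congr 1
  field_simp
  ring

lemma im_ofReal_dotProduct_mulVec [Fintype ι] (Z : Matrix ι ι ℂ) (x : ι → ℝ) :
    ((fun i => (x i : ℂ)) ⬝ᵥ Z *ᵥ fun i => (x i : ℂ)).im = x ⬝ᵥ Z.map im *ᵥ x := by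
  simp [dotProduct, mulVec, Complex.im_sum, Finset.mul_sum]

lemma exp_pi_mul_I_mul_two_mul_int (k : ℤ) : cexp (π * I * (2 * k : ℤ)) = 1 := by
  rw [← Complex.exp_int_mul_two_pi_mul_I k]; push_cast; ring_nf

lemma one_add_exp_pi_mul_I_int (k : ℤ) :
    1 + cexp (π * I * k) = if Even k then 2 else 0 := by
  rcases Int.even_or_odd' k with ⟨m, rfl | rfl⟩
  · rw [exp_pi_mul_I_mul_two_mul_int, if_pos (even_two_mul m)]; norm_num
  · rw [if_neg (Int.not_even_iff_odd.2 (odd_two_mul_add_one m)), Int.cast_add, mul_add,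
      Complex.exp_add, exp_pi_mul_I_mul_two_mul_int]
    simp

namespace SiegelTheta

def latticePoint (a g : ι → ℤ) : ι → ℂ := fun i => (g i : ℂ) + (a i : ℂ) / 2

-- Reduced characteristics `{0,1}^ι` are indexed by `ι → ZMod 2`.
def charVec (a : ι → ZMod 2) : ι → ℤ := fun i => (a i).val

lemma two_nsmul_add_apply (h τ : ι → ℤ) (i : ι) : (2 • h + τ) i = 2 * h i + τ i := rfl

lemma dotProduct_intCast_zero [Fintype ι] (w : ι → ℂ) :
    (w ⬝ᵥ fun i => (((0 : ι → ℤ) i : ℤ) : ℂ)) = 0 := by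
  simp [dotProduct]

-- Writes a pair of lattice points as `(g, h) = (p + q + a, p - q)`, so that
-- `g + h = 2p + a` and `g - h = 2q + a` with the parity `a` of `g + h`.
def latticePairEquiv : (ι → ZMod 2) × (ι → ℤ) × (ι → ℤ) ≃ (ι → ℤ) × (ι → ℤ) where
  toFun x := (x.2.1 + x.2.2 + charVec x.1, x.2.1 - x.2.2)
  invFun y := (fun i => ((y.1 + y.2) i : ZMod 2), fun i => (y.1 i + y.2 i) / 2,
    fun i => (y.1 i + y.2 i) / 2 - y.2 i)
  left_inv := by
    rintro ⟨a, p, q⟩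
    have ha : ∀ i, ((a i).val : ℤ) < 2 := fun i => by exact_mod_cast (a i).val_lt
    simp only [Prod.mk.injEq]
    refine ⟨funext fun i => ?_, funext fun i => ?_, funext fun i => ?_⟩
    · simp only [Pi.add_apply, Pi.sub_apply, charVec, Int.cast_add, Int.cast_sub,
        ZMod.natCast_val, ZMod.intCast_cast, ZMod.cast_id', id_eq]
      have h2 : (2 : ZMod 2) = 0 := rfl
      linear_combination (p i : ZMod 2) * h2
    · have := ha i; simp only [charVec, Pi.add_apply, Pi.sub_apply]; omega
    · have := ha i; simp only [charVec, Pi.add_apply, Pi.sub_apply]; omega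
  right_inv := by
    rintro ⟨g, h⟩
    simp only [Prod.mk.injEq]
    constructor <;> funext i <;>
      simp only [charVec, Pi.add_apply, Pi.sub_apply, ZMod.val_intCast] <;> omega

lemma map_im_real_smul (r : ℝ) (Z : Matrix ι ι ℂ) : (r • Z).map im = r • Z.map im := by
  ext; simp

lemma posDef_map_im_smul {Z : Matrix ι ι ℂ} (hZ : (Z.map im).PosDef) {r : ℝ} (hr : 0 < r) :
    ((r • Z).map im).PosDef := by
  rw [map_im_real_smul]
  exact hZ.smul hr

variable [Fintype ι]

def thetaTerm (a b : ι → ℤ) (Z : Matrix ι ι ℂ) (g : ι → ℤ) : ℂ :=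
  cexp (π * I * (latticePoint a g ⬝ᵥ Z *ᵥ latticePoint a g +
    latticePoint a g ⬝ᵥ fun i => (b i : ℂ)))

def theta (a b : ι → ℤ) (Z : Matrix ι ι ℂ) : ℂ := ∑' g, thetaTerm a b Z g

theorem thetaNull_eq_theta (a b : Fin 2 → ℤ) (Z : Matrix (Fin 2) (Fin 2) ℂ) :
    thetaNull a b Z = theta a b Z := rfl

lemma norm_thetaTerm (a b : ι → ℤ) (Z : Matrix ι ι ℂ) (g : ι → ℤ) :
    ‖thetaTerm a b Z g‖ = Real.exp (-π * ((fun i => g i + a i / 2 : ι → ℝ) ⬝ᵥ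
      Z.map im *ᵥ fun i => g i + a i / 2)) := by
  have hx : latticePoint a g = fun i => ((g i + a i / 2 : ℝ) : ℂ) := by
    ext i; push_cast [latticePoint]; ring
  rw [thetaTerm, Complex.norm_exp, hx, ← im_ofReal_dotProduct_mulVec]
  simp [dotProduct, Complex.im_sum]

lemma summable_norm_thetaTerm {Z : Matrix ι ι ℂ} (hZ : (Z.map im).PosDef) (a b : ι → ℤ) :
    Summable fun g => ‖thetaTerm a b Z g‖ := by
  obtain ⟨l, hl, hlQ⟩ := hZ.exists_pos_mul_dotProduct_self_le
  refine .of_nonneg_of_le (fun g => norm_nonneg _) (fun g => ?_) (summable_pi_prod_of_nonneg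
    (f := fun i (n : ℤ) => Real.exp (-(π * l * (n + a i / 2) ^ 2)))
    (fun _ _ => (Real.exp_pos _).le) fun i => summable_exp_neg_mul_add_sq (by positivity) _)
  set x : ι → ℝ := fun i => g i + a i / 2
  have hsum : ∑ i, -(π * l * x i ^ 2) = -π * (l * (x ⬝ᵥ x)) := by
    simp only [dotProduct, Finset.mul_sum]
    ring_nf
  rw [norm_thetaTerm, ← Real.exp_sum, Real.exp_le_exp, hsum]
  exact mul_le_mul_of_nonpos_left (hlQ x) (neg_nonpos.2 Real.pi_pos.le)

lemma summable_thetaTerm {Z : Matrix ι ι ℂ} (hZ : (Z.map im).PosDef) (a b : ι → ℤ) :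
    Summable (thetaTerm a b Z) :=
  (summable_norm_thetaTerm hZ a b).of_norm

lemma sum_exp_pi_mul_I_dotProduct_charVec [DecidableEq ι] (k : ι → ℤ) :
    ∑ c : ι → ZMod 2, cexp (π * I * (k ⬝ᵥ charVec c : ℤ)) =
      ∏ i, (1 + cexp (π * I * k i)) := by
  set f : ι → ZMod 2 → ℂ := fun i x => cexp (π * I * (k i * x.val : ℤ))
  calc ∑ c : ι → ZMod 2, cexp (π * I * (k ⬝ᵥ charVec c : ℤ))
      = ∑ c : ι → ZMod 2, ∏ i, f i (c i) := by
        simp [f, dotProduct, charVec, Finset.mul_sum, Complex.exp_sum]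
    _ = ∏ i, ∑ x, f i x := (Fintype.prod_sum f).symm
    _ = ∏ i, (1 + cexp (π * I * k i)) := by
        refine Finset.prod_congr rfl fun i _ => ?_
        change ∑ x : Fin 2, _ = _
        rw [Fin.sum_univ_two]
        simp [ZMod.val]

lemma thetaTerm_zero_eq_mul_exp (b : ι → ℤ) (Z : Matrix ι ι ℂ) (g : ι → ℤ) :
    thetaTerm 0 b Z g = thetaTerm 0 0 Z g * cexp (π * I * (g ⬝ᵥ b : ℤ)) := by
  simp [thetaTerm, latticePoint, ← Complex.exp_add, dotProduct, mul_add]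

lemma thetaTerm_zero_two_smul_add (τ : ι → ℤ) (Z : Matrix ι ι ℂ) (h : ι → ℤ) :
    thetaTerm 0 0 Z (2 • h + τ) = thetaTerm τ 0 ((4 : ℝ) • Z) h := by
  have hv : latticePoint 0 (2 • h + τ) = (2 : ℂ) • latticePoint τ h := by
    ext i
    simp only [latticePoint, two_nsmul_add_apply, Pi.smul_apply, Pi.zero_apply, smul_eq_mul]
    push_cast
    ring
  simp only [thetaTerm, hv, smul_dotProduct, dotProduct_smul, smul_mulVec, mulVec_smul,
    dotProduct_intCast_zero, add_zero, real_smul]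
  push_cast
  ring_nf

lemma thetaTerm_add_add_mul_thetaTerm_sub (a c : ι → ℤ) (Z : Matrix ι ι ℂ) (p q : ι → ℤ) :
    thetaTerm 0 c Z (p + q + a) * thetaTerm 0 c Z (p - q) =
      cexp (π * I * (a ⬝ᵥ c : ℤ)) *
        (thetaTerm a 0 ((2 : ℝ) • Z) p * thetaTerm a 0 ((2 : ℝ) • Z) q) := by
  set u := latticePoint a p
  set v := latticePoint a q
  have hu : latticePoint 0 (p + q + a) = u + v := by
    ext i; simp only [u, v, latticePoint, Pi.add_apply, Pi.zero_apply]; push_cast; ring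
  have hv : latticePoint 0 (p - q) = u - v := by ext i; simp [u, v, latticePoint]
  have hpar : (u + v) ⬝ᵥ Z *ᵥ (u + v) + (u - v) ⬝ᵥ Z *ᵥ (u - v) =
      2 * (u ⬝ᵥ Z *ᵥ u + v ⬝ᵥ Z *ᵥ v) := by
    simp only [add_dotProduct, dotProduct_add, sub_dotProduct, dotProduct_sub, mulVec_add,
      mulVec_sub]
    ring
  have hlin : (u + v) ⬝ᵥ (fun i => (c i : ℂ)) + (u - v) ⬝ᵥ (fun i => (c i : ℂ)) =
      2 * (p ⬝ᵥ c : ℤ) + (a ⬝ᵥ c : ℤ) := by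
    simp only [dotProduct, Int.cast_sum, Int.cast_mul, Finset.mul_sum,
      ← Finset.sum_add_distrib]
    refine Finset.sum_congr rfl fun i _ => ?_
    simp only [u, latticePoint, Pi.add_apply, Pi.sub_apply]
    ring
  simp only [thetaTerm, hu, hv, ← Complex.exp_add]
  refine Complex.exp_eq_exp_iff_exists_int.2 ⟨p ⬝ᵥ c, ?_⟩
  simp only [smul_mulVec, dotProduct_smul, real_smul, dotProduct_intCast_zero]
  push_cast
  linear_combination (π * I) * hpar + (π * I) * hlin

theorem theta_zero_sq [DecidableEq ι] {Z : Matrix ι ι ℂ} (hZ : (Z.map im).PosDef)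
    (c : ι → ℤ) :
    theta 0 c Z ^ 2 = ∑ a : ι → ZMod 2,
      cexp (π * I * (charVec a ⬝ᵥ c : ℤ)) * theta (charVec a) 0 ((2 : ℝ) • Z) ^ 2 := by
  have h2Z := posDef_map_im_smul hZ two_pos
  set f := thetaTerm 0 c Z
  have hf := summable_norm_thetaTerm hZ 0 c
  have hs : Summable fun x => f (latticePairEquiv x).1 * f (latticePairEquiv x).2 :=
    latticePairEquiv.summable_iff.2 (summable_mul_of_summable_norm hf hf)
  calc theta 0 c Z ^ 2 = ∑' y : (ι → ℤ) × (ι → ℤ), f y.1 * f y.2 := by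
        rw [sq, theta, tsum_mul_tsum_of_summable_norm hf hf]
    _ = ∑' x, f (latticePairEquiv x).1 * f (latticePairEquiv x).2 :=
        (latticePairEquiv.tsum_eq fun y => f y.1 * f y.2).symm
    _ = ∑ a, ∑' pq : (ι → ℤ) × (ι → ℤ),
          f (pq.1 + pq.2 + charVec a) * f (pq.1 - pq.2) := by
        rw [hs.tsum_prod, tsum_fintype]
        rfl
    _ = _ := by
        refine Finset.sum_congr rfl fun a _ => ?_
        simp only [f, thetaTerm_add_add_mul_thetaTerm_sub]
        rw [tsum_mul_left, theta, sq, tsum_mul_tsum_of_summable_norm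
          (summable_norm_thetaTerm h2Z _ 0) (summable_norm_thetaTerm h2Z _ 0)]

theorem sum_exp_mul_theta_zero [DecidableEq ι] {Z : Matrix ι ι ℂ}
    (hZ : (Z.map im).PosDef) (τ : ι → ℤ) :
    ∑ c : ι → ZMod 2, cexp (π * I * (τ ⬝ᵥ charVec c : ℤ)) * theta 0 (charVec c) Z =
      2 ^ Fintype.card ι * theta τ 0 ((4 : ℝ) • Z) := by
  -- `∏ i, (1 + (-1) ^ (τ i + g i))` is `2 ^ card ι` if `g ≡ τ (mod 2)` and `0` otherwise.
  set W : (ι → ℤ) → ℂ := fun g =>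
    thetaTerm 0 0 Z g * ∏ i, (1 + cexp (π * I * ((τ + g) i : ℤ)))
  have hW : ∑ c : ι → ZMod 2, cexp (π * I * (τ ⬝ᵥ charVec c : ℤ)) * theta 0 (charVec c) Z =
      ∑' g, W g := by
    simp_rw [theta, ← tsum_mul_left]
    rw [← Summable.tsum_finsetSum fun c _ => (summable_thetaTerm hZ _ _).mul_left _]
    refine tsum_congr fun g => ?_
    simp only [W]
    rw [← sum_exp_pi_mul_I_dotProduct_charVec, Finset.mul_sum]
    refine Finset.sum_congr rfl fun c _ => ?_
    rw [thetaTerm_zero_eq_mul_exp (charVec c), mul_left_comm, ← Complex.exp_add, add_dotProduct]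
    push_cast
    ring_nf
  have hinj : Function.Injective fun h : ι → ℤ => 2 • h + τ := fun h h' e => by
    funext i; have := congrFun e i; simp only [two_nsmul_add_apply] at this; omega
  have hsupp : W.support ⊆ Set.range fun h : ι → ℤ => 2 • h + τ := by
    intro g hg
    have heven : ∀ i, Even ((τ + g) i) := fun i => by
      by_contra hodd
      refine hg (mul_eq_zero_of_right _ (Finset.prod_eq_zero (Finset.mem_univ i) ?_))
      rw [one_add_exp_pi_mul_I_int, if_neg hodd]
    refine ⟨fun i => (g i - τ i) / 2, funext fun i => ?_⟩
    have := heven i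
    simp only [Pi.add_apply, Int.even_iff] at this
    simp only [two_nsmul_add_apply]
    omega
  have hval : ∀ h, W (2 • h + τ) = 2 ^ Fintype.card ι * thetaTerm τ 0 ((4 : ℝ) • Z) h := by
    intro h
    have htwo : ∀ i, 1 + cexp (π * I * ((τ + (2 • h + τ)) i : ℤ)) = 2 := fun i => by
      rw [one_add_exp_pi_mul_I_int,
        if_pos ⟨τ i + h i, by rw [Pi.add_apply, two_nsmul_add_apply]; ring⟩]
    simp only [W, htwo, Finset.prod_const, Finset.card_univ, thetaTerm_zero_two_smul_add]
    ring
  rw [hW, ← hinj.tsum_eq hsupp, tsum_congr hval, tsum_mul_left, theta]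

theorem tendsto_theta_zero_zero_smul_atTop {Z : Matrix ι ι ℂ} (hZ : (Z.map im).PosDef) :
    Tendsto (fun t : ℝ => theta 0 0 (t • Z)) atTop (𝓝 1) := by
  set Q : (ι → ℤ) → ℝ := fun g => (fun i => (g i : ℝ)) ⬝ᵥ Z.map im *ᵥ fun i => (g i : ℝ)
  have hnorm : ∀ (t : ℝ) g, ‖thetaTerm 0 0 (t • Z) g‖ = Real.exp (-π * (t * Q g)) := by
    intro t g
    rw [norm_thetaTerm, map_im_real_smul, smul_mulVec, dotProduct_smul, smul_eq_mul]
    simp [Q]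
  have hlim : ∀ g, Tendsto (fun t : ℝ => thetaTerm 0 0 (t • Z) g) atTop
      (𝓝 (if g = 0 then 1 else 0)) := by
    intro g
    split_ifs with hg
    · have h0 : latticePoint (0 : ι → ℤ) 0 = 0 := by ext; simp [latticePoint]
      simp [hg, thetaTerm, h0]
    · have hx : (fun i => (g i : ℝ)) ≠ 0 := fun h =>
        hg (funext fun i => Int.cast_eq_zero.1 (congrFun h i))
      have hQ : 0 < Q g := by simpa using hZ.dotProduct_mulVec_pos hx
      rw [tendsto_zero_iff_norm_tendsto_zero]
      simp_rw [hnorm]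
      exact Real.tendsto_exp_atBot.comp
        ((tendsto_id.atTop_mul_const hQ).const_mul_atTop_of_neg (by linarith [Real.pi_pos]))
  have hbound : ∀ᶠ t : ℝ in atTop, ∀ g, ‖thetaTerm 0 0 (t • Z) g‖ ≤ ‖thetaTerm 0 0 Z g‖ := by
    filter_upwards [eventually_ge_atTop 1] with t ht g
    have hQ : 0 ≤ Q g := hZ.posSemidef.dotProduct_mulVec_nonneg _
    have h1 := hnorm 1 g
    rw [one_smul, one_mul] at h1
    rw [hnorm, h1, Real.exp_le_exp]
    nlinarith [mul_nonneg (mul_nonneg Real.pi_pos.le (sub_nonneg.2 ht)) hQ]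
  simpa only [theta, tsum_ite_eq] using
    tendsto_tsum_of_dominated_convergence (summable_norm_thetaTerm hZ 0 0) hlim hbound

theorem theta_zero_two_smul_eq_zero [DecidableEq ι] {Z : Matrix ι ι ℂ}
    (hZ : (Z.map im).PosDef) (h : ∀ c : ι → ZMod 2, theta 0 (charVec c) Z = 0) (c : ι → ℤ) :
    theta 0 c ((2 : ℝ) • Z) = 0 := by
  have h4 : ∀ a, theta (charVec a) 0 ((4 : ℝ) • Z) = 0 := fun a => by
    simpa [h] using sum_exp_mul_theta_zero hZ (charVec a)
  have := theta_zero_sq (posDef_map_im_smul hZ two_pos) c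
  rw [smul_smul] at this
  norm_num [h4] at this
  exact this

theorem exists_theta_zero_charVec_ne_zero [DecidableEq ι] {Z : Matrix ι ι ℂ}
    (hZ : (Z.map im).PosDef) : ∃ c : ι → ZMod 2, theta 0 (charVec c) Z ≠ 0 := by
  by_contra! hzero
  have hk : ∀ k : ℕ, ∀ c : ι → ZMod 2, theta 0 (charVec c) ((2 : ℝ) ^ k • Z) = 0 := by
    intro k
    induction k with
    | zero => simpa using hzero
    | succ k ih =>
      intro c
      rw [pow_succ', ← smul_smul]
      exact theta_zero_two_smul_eq_zero (posDef_map_im_smul hZ (by positivity)) ih _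
  have hlim := (tendsto_theta_zero_zero_smul_atTop hZ).comp
    (tendsto_pow_atTop_atTop_of_one_lt one_lt_two)
  have h0 : charVec (0 : ι → ZMod 2) = 0 := by ext; simp [charVec]
  have hzero' : ∀ k : ℕ, theta 0 0 ((2 : ℝ) ^ k • Z) = 0 := fun k => h0 ▸ hk k 0
  have hlim0 : Tendsto (fun k : ℕ => theta 0 0 ((2 : ℝ) ^ k • Z)) atTop (𝓝 0) := by
    simp only [hzero', tendsto_const_nhds]
  exact one_ne_zero (tendsto_nhds_unique hlim hlim0)

end SiegelTheta

end

/-- The ten even theta constants of genus 2 have no common zero on `H₂`: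
for every `Z ∈ H₂` there is an even characteristic `m = (a,b)` with
`θ[m](Z) ≠ 0`. -/
theorem even_theta_constants_no_common_zero :
    ∀ Z ∈ SiegelH2, ∃ a b : Fin 2 → ℤ,
      (∀ i, a i = 0 ∨ a i = 1) ∧ (∀ i, b i = 0 ∨ b i = 1) ∧
        Even (∑ i, a i * b i) ∧ thetaNull a b Z ≠ 0 := by
  intro Z hZ
  obtain ⟨c, hc⟩ := SiegelTheta.exists_theta_zero_charVec_ne_zero hZ.2
  refine ⟨0, SiegelTheta.charVec c, fun i => Or.inl rfl, fun i => ?_, by simp,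
    by rwa [SiegelTheta.thetaNull_eq_theta]⟩
  have := (c i).val_lt
  simp only [SiegelTheta.charVec]
  omega
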